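/- arXiv:0707.3715 — 3 statements merged into one kernel-verified Lean document; each statement's English description precedes it below -/
import Mathlib

section
/- Let (X_n) be a supercritical Galton–Watson process with X_0 = 1, offspring distribution with mean m > 1 and finite variance, conditioned on nonextinction (the extinction set is assumed negligible). Let m̃_n = X_n / X_{n−1} be the Lotka–Nagaev estimator. Assume the cumulant generating function L(t) = log E[exp(t(Y − m))] of the centered offspring variable Y − m is finite on [−c, c] with c > 0, and let I(x) = sup_{−c≤t≤c}{ xt − L(t) } and J(x) = min(I(x), I(−x)). Then for all n ≥ 1 and x > 0, P(|m̃_n − m| ≥ x) ≤ 2 E[exp(−J(x) X_{n−1})]. -/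
/-!
Condition on the size `X_{n-1} = k` of the previous generation. It is a function of the offspring
counts of generations `< n`, hence independent of those of generation `n`, and on
`{X_{n-1} = k}` the deviation `X_n - k m` is the sum `S_k` of `k` i.i.d. centred offspring
variables. So `P(|m̃_n - m| ≥ x, X_{n-1} = k) ≤ P(X_{n-1} = k) P(|S_k| ≥ k x)`, and the Chernoff
bounds on the two tails of `S_k`, optimised over `t ∈ [-c, c]`, give
`P(|S_k| ≥ k x) ≤ 2 exp(-k J(x))`. Parameters `t` of the wrong sign may be included in the
supremum since the cumulant generating function of a centred variable is nonnegative. Summing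
over `k` gives `2 E[exp(-J(x) X_{n-1})]`.
-/

open MeasureTheory ProbabilityTheory Real Finset

/-- If `s` is empty or unbounded above then `sSup s = 0`, and the claim is `p ≤ 1`. -/
lemma le_exp_neg_mul_sSup {p k : ℝ} (hp0 : 0 ≤ p) (hp1 : p ≤ 1) (hk : 0 ≤ k) {s : Set ℝ}
    (h : ∀ y ∈ s, p ≤ exp (-k * y)) : p ≤ exp (-k * sSup s) := by
  rcases hk.eq_or_lt with rfl | hk
  · simpa using hp1
  rcases hp0.eq_or_lt with rfl | hp
  · exact (exp_pos _).le
  have hsup : sSup s ≤ -log p / k := by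
    refine Real.sSup_le (fun y hy => ?_) (div_nonneg (neg_nonneg.mpr (log_nonpos hp0 hp1)) hk.le)
    rw [le_div_iff₀ hk]
    linarith [(log_le_iff_le_exp hp).mpr (h y hy)]
  calc p = exp (log p) := (exp_log hp).symm
    _ ≤ exp (-k * sSup s) := by
      gcongr
      linarith [(le_div_iff₀ hk).mp hsup]

namespace ProbabilityTheory

variable {Ω : Type*} {mΩ : MeasurableSpace Ω} {μ : Measure Ω}

lemma cgf_nonneg_of_integral_eq_zero [IsProbabilityMeasure μ] {Z : Ω → ℝ} {t : ℝ}
    (hZ : Integrable Z μ) (hmean : μ[Z] = 0) (ht : Integrable (fun ω => exp (t * Z ω)) μ) :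
    0 ≤ cgf Z μ t := by
  refine log_nonneg ?_
  calc (1 : ℝ) = ∫ ω, (1 + t * Z ω) ∂μ := by
        rw [integral_add (integrable_const 1) (hZ.const_mul t), integral_const_mul, hmean]
        simp
    _ ≤ mgf Z μ t :=
        integral_mono ((integrable_const 1).add (hZ.const_mul t)) ht
          fun ω => by linarith [add_one_le_exp (t * Z ω)]

noncomputable def rateFunctionOn (Z : Ω → ℝ) (μ : Measure Ω) (T : Set ℝ) (x : ℝ) : ℝ :=
  sSup ((fun t => x * t - cgf Z μ t) '' T)

lemma rateFunctionOn_neg (Z : Ω → ℝ) (μ : Measure Ω) (T : Set ℝ) (x : ℝ) :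
    rateFunctionOn (-Z) μ (-T) x = rateFunctionOn Z μ T (-x) := by
  rw [rateFunctionOn, rateFunctionOn, ← Set.image_neg_eq_neg, Set.image_image]
  simp_rw [cgf_neg, neg_neg, mul_neg, neg_mul]

lemma rateFunctionOn_nonneg [IsProbabilityMeasure μ] (Z : Ω → ℝ) {T : Set ℝ} (hT : 0 ∈ T)
    (x : ℝ) : 0 ≤ rateFunctionOn Z μ T x :=
  Real.sSup_nonneg' ⟨0, ⟨0, hT, by simp [cgf_zero]⟩, le_rfl⟩

section Chernoff

variable [IsProbabilityMeasure μ] {Z : ℕ → Ω → ℝ} {Z₀ : Ω → ℝ} {T : Set ℝ}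

lemma measureReal_sum_range_ge_le (hindep : iIndepFun Z μ) (hmeas : ∀ i, Measurable (Z i))
    (hident : ∀ i, IdentDistrib (Z i) Z₀ μ μ) (hint : Integrable Z₀ μ) (hmean : μ[Z₀] = 0)
    (hT : ∀ t ∈ T, Integrable (fun ω => exp (t * Z₀ ω)) μ) {x : ℝ} (hx : 0 ≤ x) (k : ℕ) :
    μ.real {ω | k * x ≤ ∑ i ∈ range k, Z i ω} ≤ exp (-k * rateFunctionOn Z₀ μ T x) := by
  refine le_exp_neg_mul_sSup measureReal_nonneg measureReal_le_one k.cast_nonneg ?_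
  rintro - ⟨t, ht, rfl⟩
  have hL := cgf_nonneg_of_integral_eq_zero hint hmean (hT t ht)
  rcases le_or_gt 0 t with ht0 | ht0
  · have hexp : ∀ i, IdentDistrib (fun ω => exp (t * Z i ω)) (fun ω => exp (t * Z₀ ω)) μ μ :=
      fun i => (hident i).comp (u := fun z => exp (t * z)) (by fun_prop)
    have hcgf : cgf (∑ i ∈ range k, Z i) μ t = k * cgf Z₀ μ t := by
      rw [hindep.cgf_sum hmeas fun i _ => (hexp i).integrable_iff.mpr (hT t ht)]
      simp [cgf, mgf, fun i => (hexp i).integral_eq]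
    have := measure_ge_le_exp_cgf (μ := μ) (k * x) ht0 (X := ∑ i ∈ range k, Z i)
      (hindep.integrable_exp_mul_sum hmeas fun i _ => (hexp i).integrable_iff.mpr (hT t ht))
    simp only [Finset.sum_apply, hcgf] at this
    exact this.trans_eq (by ring_nf)
  · refine measureReal_le_one.trans (one_le_exp ?_)
    have hy : x * t - cgf Z₀ μ t ≤ 0 := by nlinarith
    exact mul_nonneg_of_nonpos_of_nonpos (neg_nonpos.mpr k.cast_nonneg) hy

lemma measureReal_sum_range_le_neg_le (hindep : iIndepFun Z μ) (hmeas : ∀ i, Measurable (Z i))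
    (hident : ∀ i, IdentDistrib (Z i) Z₀ μ μ) (hint : Integrable Z₀ μ) (hmean : μ[Z₀] = 0)
    (hT : ∀ t ∈ T, Integrable (fun ω => exp (t * Z₀ ω)) μ) {x : ℝ} (hx : 0 ≤ x) (k : ℕ) :
    μ.real {ω | ∑ i ∈ range k, Z i ω ≤ -(k * x)} ≤ exp (-k * rateFunctionOn Z₀ μ T (-x)) := by
  have hneg := measureReal_sum_range_ge_le (Z := fun i => -Z i) (Z₀ := -Z₀) (T := -T)
    (hindep.comp (fun _ => Neg.neg) fun _ => measurable_neg) (fun i => (hmeas i).neg)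
    (fun i => (hident i).comp measurable_neg) hint.neg (by simp [integral_neg, hmean])
    (fun t ht => by simpa [mul_neg, ← neg_mul] using hT (-t) ht) hx k
  rw [rateFunctionOn_neg] at hneg
  convert hneg using 3
  simp only [Pi.neg_apply, sum_neg_distrib, le_neg]

lemma measure_abs_sum_range_ge_le (hindep : iIndepFun Z μ) (hmeas : ∀ i, Measurable (Z i))
    (hident : ∀ i, IdentDistrib (Z i) Z₀ μ μ) (hint : Integrable Z₀ μ) (hmean : μ[Z₀] = 0)
    (hT : ∀ t ∈ T, Integrable (fun ω => exp (t * Z₀ ω)) μ) {x : ℝ} (hx : 0 ≤ x) (k : ℕ) :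
    μ {ω | k * x ≤ |∑ i ∈ range k, Z i ω|} ≤ ENNReal.ofReal
      (2 * exp (-k * min (rateFunctionOn Z₀ μ T x) (rateFunctionOn Z₀ μ T (-x)))) := by
  have hsplit : {ω | k * x ≤ |∑ i ∈ range k, Z i ω|} ⊆
      {ω | k * x ≤ ∑ i ∈ range k, Z i ω} ∪ {ω | ∑ i ∈ range k, Z i ω ≤ -(k * x)} :=
    fun _ hω => (le_abs'.mp (Set.mem_ofPred.mp hω)).symm
  calc μ {ω | k * x ≤ |∑ i ∈ range k, Z i ω|}
      ≤ μ {ω | k * x ≤ ∑ i ∈ range k, Z i ω} + μ {ω | ∑ i ∈ range k, Z i ω ≤ -(k * x)} :=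
        (measure_mono hsplit).trans (measure_union_le _ _)
    _ ≤ _ := by
      rw [← ofReal_measureReal, ← ofReal_measureReal, ← ENNReal.ofReal_add measureReal_nonneg
        measureReal_nonneg, two_mul]
      gcongr
      · refine (measureReal_sum_range_ge_le hindep hmeas hident hint hmean hT hx k).trans ?_
        rw [neg_mul, neg_mul]
        gcongr
        exact min_le_left _ _
      · refine (measureReal_sum_range_le_neg_le hindep hmeas hident hint hmean hT hx k).trans ?_
        rw [neg_mul, neg_mul]
        gcongr
        exact min_le_right _ _

end Chernoff

end ProbabilityTheory

section GaltonWatson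

variable {Ω : Type*} {mΩ : MeasurableSpace Ω} {μ : Measure Ω}

lemma measure_le_ofReal_integral_of_forall_fiber {X : Ω → ℕ} (hX : Measurable X) {E : Set Ω}
    {g : ℕ → ℝ} (hg : ∀ k, 0 ≤ g k) (hint : Integrable (fun ω => g (X ω)) μ)
    (hE : ∀ k, μ (E ∩ X ⁻¹' {k}) ≤ μ (X ⁻¹' {k}) * ENNReal.ofReal (g k)) :
    μ E ≤ ENNReal.ofReal (∫ ω, g (X ω) ∂μ) := by
  have hcover : E ⊆ ⋃ k, E ∩ X ⁻¹' {k} := fun ω hω => Set.mem_iUnion.mpr ⟨X ω, hω, rfl⟩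
  calc μ E ≤ ∑' k, μ (E ∩ X ⁻¹' {k}) := (measure_mono hcover).trans (measure_iUnion_le _)
    _ ≤ ∑' k, μ (X ⁻¹' {k}) * ENNReal.ofReal (g k) := ENNReal.tsum_le_tsum hE
    _ = ∫⁻ k, ENNReal.ofReal (g k) ∂(μ.map X) := by
      rw [lintegral_countable']
      exact tsum_congr fun k => by rw [Measure.map_apply hX (measurableSet_singleton k), mul_comm]
    _ = ENNReal.ofReal (∫ ω, g (X ω) ∂μ) := by
      rw [lintegral_map (by fun_prop) hX,
        ofReal_integral_eq_lintegral_ofReal hint (ae_of_all _ fun ω => hg (X ω))]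

variable {Y : ℕ → ℕ → Ω → ℕ} {X : ℕ → Ω → ℕ}

noncomputable abbrev offspringMeasurableSpace (Y : ℕ → ℕ → Ω → ℕ) (S : Set (ℕ × ℕ)) :
    MeasurableSpace Ω :=
  ⨆ q ∈ S, MeasurableSpace.comap (Y q.1 q.2) inferInstance

lemma measurable_offspring_of_mem {S : Set (ℕ × ℕ)} {j i : ℕ} (h : (j, i) ∈ S) :
    Measurable[offspringMeasurableSpace Y S] (Y j i) :=
  measurable_iff_comap_le.mpr <| le_iSup₂
    (f := fun q (_ : q ∈ S) => MeasurableSpace.comap (Y q.1 q.2) inferInstance) (j, i) h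

lemma measurable_generation (hX0 : ∀ ω, X 0 ω = 1)
    (hXrec : ∀ n : ℕ, 1 ≤ n → ∀ ω, X n ω = ∑ k ∈ range (X (n - 1) ω), Y n k ω)
    {N j : ℕ} (hj : j ≤ N) : Measurable[offspringMeasurableSpace Y {q | q.1 ≤ N}] (X j) := by
  let _ := offspringMeasurableSpace Y {q : ℕ × ℕ | q.1 ≤ N}
  induction j with
  | zero => exact (funext hX0 : X 0 = fun _ => 1) ▸ measurable_const
  | succ j ih =>
    have hsum : Measurable fun p : ℕ × Ω => ∑ i ∈ range p.1, Y (j + 1) i p.2 :=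
      measurable_from_prod_countable_right fun k => show Measurable fun ω => ∑ i ∈ range k, _ from
        Finset.measurable_sum _ fun i _ => measurable_offspring_of_mem (Set.mem_ofPred.mpr hj)
    have hrec : X (j + 1) = fun ω => ∑ i ∈ range (X j ω), Y (j + 1) i ω :=
      funext (hXrec (j + 1) j.succ_pos)
    rw [hrec]
    exact hsum.comp ((ih (by omega)).prodMk measurable_id)

lemma indepFun_generation_offspring (hYmeas : ∀ n k, Measurable (Y n k))
    (hYindep : iIndepFun (fun q : ℕ × ℕ => Y q.1 q.2) μ) (hX0 : ∀ ω, X 0 ω = 1)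
    (hXrec : ∀ n : ℕ, 1 ≤ n → ∀ ω, X n ω = ∑ k ∈ range (X (n - 1) ω), Y n k ω) (N : ℕ) :
    IndepFun (X N) (fun ω i => Y (N + 1) i ω) μ := by
  have hdisj : Disjoint {q : ℕ × ℕ | q.1 ≤ N} {q | q.1 = N + 1} :=
    Set.disjoint_left.mpr fun q hq hq' => by simp_all
  have hindep := indep_iSup_of_disjoint (fun q => (hYmeas q.1 q.2).comap_le)
    ((iIndepFun_iff_iIndep _ _ _).mp hYindep) hdisj
  have hrow : Measurable[offspringMeasurableSpace Y {q | q.1 = N + 1}]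
      (fun ω i => Y (N + 1) i ω) := by
    let _ := offspringMeasurableSpace Y {q : ℕ × ℕ | q.1 = N + 1}
    exact measurable_pi_lambda _ fun i => measurable_offspring_of_mem rfl
  rw [IndepFun_iff_Indep]
  exact indep_of_indep_of_le_right
    (indep_of_indep_of_le_left hindep (measurable_generation hX0 hXrec le_rfl).comap_le)
    hrow.comap_le

lemma measure_lotkaNagaev_inter_generation_le (hYmeas : ∀ n k, Measurable (Y n k))
    (hYindep : iIndepFun (fun q : ℕ × ℕ => Y q.1 q.2) μ) (hX0 : ∀ ω, X 0 ω = 1)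
    (hXrec : ∀ n : ℕ, 1 ≤ n → ∀ ω, X n ω = ∑ k ∈ range (X (n - 1) ω), Y n k ω)
    (m x : ℝ) (N k : ℕ) :
    μ ({ω | x ≤ |(X (N + 1) ω : ℝ) / X N ω - m|} ∩ X N ⁻¹' {k})
      ≤ μ (X N ⁻¹' {k}) * μ {ω | k * x ≤ |∑ i ∈ range k, ((Y (N + 1) i ω : ℝ) - m)|} := by
  set B : Set (ℕ → ℕ) := {y | k * x ≤ |∑ i ∈ range k, ((y i : ℝ) - m)|}
  have hB : MeasurableSet B := measurableSet_le measurable_const (by fun_prop)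
  have hsub : {ω | x ≤ |(X (N + 1) ω : ℝ) / X N ω - m|} ∩ X N ⁻¹' {k}
      ⊆ X N ⁻¹' {k} ∩ (fun ω i => Y (N + 1) i ω) ⁻¹' B := by
    rintro ω ⟨hω : x ≤ |_|, hk : X N ω = k⟩
    refine ⟨hk, ?_⟩
    have hX : (X (N + 1) ω : ℝ) = ∑ i ∈ range k, (Y (N + 1) i ω : ℝ) := by
      rw [hXrec (N + 1) N.succ_pos ω, Nat.add_sub_cancel, hk, Nat.cast_sum]
    rcases k.eq_zero_or_pos with rfl | hk0
    · simp [B]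
    have hkR : (0 : ℝ) < k := Nat.cast_pos.mpr hk0
    have hdiv : (X (N + 1) ω : ℝ) / X N ω - m
        = (∑ i ∈ range k, ((Y (N + 1) i ω : ℝ) - m)) / k := by
      rw [hk, hX, sum_sub_distrib, sum_const, card_range, nsmul_eq_mul]
      field_simp
    rw [hdiv, abs_div, Nat.abs_cast, le_div_iff₀ hkR] at hω
    simpa [B, mul_comm] using hω
  calc _ ≤ μ (X N ⁻¹' {k} ∩ (fun ω i => Y (N + 1) i ω) ⁻¹' B) := measure_mono hsub
    _ = _ := (indepFun_generation_offspring hYmeas hYindep hX0 hXrec N).measure_inter_preimage_eq_mul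
        _ _ (measurableSet_singleton k) hB

end GaltonWatson

theorem galton_watson_lotka_nagaev_exponential_inequality_general
    {Ω : Type*} {m0 : MeasurableSpace Ω} {μ : Measure Ω} [IsProbabilityMeasure μ]
    (Y : ℕ → ℕ → Ω → ℕ) (X : ℕ → Ω → ℕ)
    (hYmeas : ∀ n k, Measurable (Y n k)) (hXmeas : ∀ n, Measurable (X n))
    -- the offspring variables (Y_{n,k}) are i.i.d.
    (hYindep : iIndepFun (fun q : ℕ × ℕ => Y q.1 q.2) μ)
    (hYident : ∀ n k, IdentDistrib (Y n k) (Y 0 0) μ μ)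
    -- offspring mean m > 1 and finite variance
    {m : ℝ} (hmean : ∫ ω, (Y 0 0 ω : ℝ) ∂μ = m)
    (hYsq : MemLp (fun ω => (Y 0 0 ω : ℝ)) 2 μ)
    -- the Galton–Watson process: X_0 = 1 and X_n = Σ_{k=1}^{X_{n−1}} Y_{n,k}
    (hX0 : ∀ ω, X 0 ω = 1)
    (hXrec : ∀ n : ℕ, 1 ≤ n → ∀ ω, X n ω = ∑ k ∈ Finset.range (X (n - 1) ω), Y n k ω)
    -- the cumulant generating function of the centered offspring variable is finite on [−c, c]
    {c : ℝ} (hc : 0 < c)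
    (hLfin : ∀ t ∈ Set.Icc (-c) c,
      Integrable (fun ω => Real.exp (t * ((Y 0 0 ω : ℝ) - m))) μ)
    (L : ℝ → ℝ) (hLdef : ∀ t, L t = Real.log (∫ ω, Real.exp (t * ((Y 0 0 ω : ℝ) - m)) ∂μ))
    -- `I` is its Fenchel–Legendre transform and `J(x) = min(I(x), I(−x))`
    (I : ℝ → ℝ) (hIdef : ∀ z, I z = sSup ((fun t => z * t - L t) '' Set.Icc (-c) c))
    (J : ℝ → ℝ) (hJdef : ∀ z, J z = min (I z) (I (-z)))
    (n : ℕ) (hn : 1 ≤ n) {x : ℝ} (hx : 0 < x) :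
    μ {ω | x ≤ |(X n ω : ℝ) / (X (n - 1) ω : ℝ) - m|}
      ≤ ENNReal.ofReal (2 * ∫ ω, Real.exp (-J x * (X (n - 1) ω : ℝ)) ∂μ) := by
  obtain ⟨N, rfl⟩ : ∃ N, n = N + 1 := ⟨n - 1, by omega⟩
  rw [Nat.add_sub_cancel]
  set Z₀ : Ω → ℝ := fun ω => (Y 0 0 ω : ℝ) - m
  have hI : I = rateFunctionOn Z₀ μ (Set.Icc (-c) c) := funext fun z => by
    simp only [hIdef, rateFunctionOn, hLdef]
    rfl
  have hJ : J x = min (rateFunctionOn Z₀ μ (Set.Icc (-c) c) x)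
      (rateFunctionOn Z₀ μ (Set.Icc (-c) c) (-x)) := by rw [hJdef, hI]
  have h0c : (0 : ℝ) ∈ Set.Icc (-c) c := ⟨by linarith, hc.le⟩
  have hJ0 : 0 ≤ J x :=
    hJ ▸ le_min (rateFunctionOn_nonneg _ h0c _) (rateFunctionOn_nonneg _ h0c _)
  have hZ₀ : Integrable Z₀ μ := (hYsq.integrable one_le_two).sub (integrable_const m)
  have hZ₀mean : μ[Z₀] = 0 := by
    rw [integral_sub (hYsq.integrable one_le_two) (integrable_const m), hmean]
    simp
  have hZindep : iIndepFun (fun i ω => (Y (N + 1) i ω : ℝ) - m) μ :=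
    (hYindep.precomp (g := fun i => (N + 1, i)) fun i j h => (Prod.mk.inj h).2).comp
      (fun _ y => (y : ℝ) - m) fun _ => by fun_prop
  have hint : Integrable (fun ω => 2 * exp (-J x * X N ω)) μ :=
    .of_bound (by fun_prop) 2 <| ae_of_all _ fun ω => by
      have : exp (-J x * X N ω) ≤ 1 := exp_le_one_iff.mpr
        (mul_nonpos_of_nonpos_of_nonneg (neg_nonpos.mpr hJ0) (X N ω).cast_nonneg)
      rw [norm_of_nonneg (by positivity)]
      linarith
  rw [← integral_const_mul]
  refine measure_le_ofReal_integral_of_forall_fiber (hXmeas N)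
    (g := fun k => 2 * exp (-J x * k)) (fun k => by positivity) hint
    fun k => (measure_lotkaNagaev_inter_generation_le hYmeas hYindep hX0 hXrec m x N k).trans ?_
  gcongr
  refine (measure_abs_sum_range_ge_le (Z₀ := Z₀) hZindep (fun i => by fun_prop)
    (fun i => (hYident (N + 1) i).comp (u := fun y : ℕ => (y : ℝ) - m) (by fun_prop))
    hZ₀ hZ₀mean hLfin hx.le k).trans_eq ?_
  rw [hJ]
  ring_nf

/-- Corollary 5.3, inequality (5.11): exponential inequality for the Lotka–Nagaev estimator
`m̃_n = X_n / X_{n−1}` of the offspring mean of a supercritical Galton–Watson process: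
for all `n ≥ 1` and `x > 0`, `P(|m̃_n − m| ≥ x) ≤ 2 E[exp(−J(x) X_{n−1})]`. -/
theorem galton_watson_lotka_nagaev_exponential_inequality
    {Ω : Type*} {m0 : MeasurableSpace Ω} {μ : Measure Ω} [IsProbabilityMeasure μ]
    (Y : ℕ → ℕ → Ω → ℕ) (X : ℕ → Ω → ℕ)
    (hYmeas : ∀ n k, Measurable (Y n k)) (hXmeas : ∀ n, Measurable (X n))
    -- the offspring variables (Y_{n,k}) are i.i.d.
    (hYindep : iIndepFun (fun q : ℕ × ℕ => Y q.1 q.2) μ)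
    (hYident : ∀ n k, IdentDistrib (Y n k) (Y 0 0) μ μ)
    -- offspring mean m > 1 and finite variance
    {m : ℝ} (hm : 1 < m) (hmean : ∫ ω, (Y 0 0 ω : ℝ) ∂μ = m)
    (hYsq : MemLp (fun ω => (Y 0 0 ω : ℝ)) 2 μ)
    -- the Galton–Watson process: X_0 = 1 and X_n = Σ_{k=1}^{X_{n−1}} Y_{n,k}
    (hX0 : ∀ ω, X 0 ω = 1)
    (hXrec : ∀ n : ℕ, 1 ≤ n → ∀ ω, X n ω = ∑ k ∈ Finset.range (X (n - 1) ω), Y n k ω)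
    -- the set of extinction is negligible
    (hext : μ {ω | ∃ n, X n ω = 0} = 0)
    -- the cumulant generating function of the centered offspring variable is finite on [−c, c]
    {c : ℝ} (hc : 0 < c)
    (hLfin : ∀ t ∈ Set.Icc (-c) c,
      Integrable (fun ω => Real.exp (t * ((Y 0 0 ω : ℝ) - m))) μ)
    (L : ℝ → ℝ) (hLdef : ∀ t, L t = Real.log (∫ ω, Real.exp (t * ((Y 0 0 ω : ℝ) - m)) ∂μ))
    -- `I` is its Fenchel–Legendre transform and `J(x) = min(I(x), I(−x))`
    (I : ℝ → ℝ) (hIdef : ∀ z, I z = sSup ((fun t => z * t - L t) '' Set.Icc (-c) c))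
    (J : ℝ → ℝ) (hJdef : ∀ z, J z = min (I z) (I (-z)))
    (n : ℕ) (hn : 1 ≤ n) {x : ℝ} (hx : 0 < x) :
    μ {ω | x ≤ |(X n ω : ℝ) / (X (n - 1) ω : ℝ) - m|}
      ≤ ENNReal.ofReal (2 * ∫ ω, Real.exp (-J x * (X (n - 1) ω : ℝ)) ∂μ) :=
  galton_watson_lotka_nagaev_exponential_inequality_general (m0 := m0) Y X hYmeas hXmeas hYindep
    hYident hmean hYsq hX0 hXrec hc hLfin L hLdef I hIdef J hJdef n hn hx
end

section
/- Let (M_n) be a locally square integrable real martingale with M_0 = 0, and for real t and n ≥ 0 set V_n(t) = exp( t M_n − (t²/2)([M]_n + ⟨M⟩_n) ). Then for all real t, (V_n(t))_{n≥0} is a positive supermartingale and E[V_n(t)] ≤ 1 for all n ≥ 0. -/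
open MeasureTheory ProbabilityTheory Real Finset

/-!
With `Δ = ΔM_{n+1}` and `c = E[Δ² | F_n]`, `V_{n+1} = V_n · exp(-t²c/2) · exp(tΔ - (tΔ)²/2)`.
The elementary inequality `exp(u - u²/2) ≤ 1 + u + u²/2` and `E[Δ | F_n] = 0` give
`E[exp(tΔ - (tΔ)²/2) | F_n] ≤ 1 + t²c/2 ≤ exp(t²c/2)`, hence `E[V_{n+1} | F_n] ≤ V_n`.
Thanks to the `[M]` term the last factor is bounded by `exp(1/2)`, so every `V_n` is integrable.
-/

lemma exp_sub_sq_half_le (u : ℝ) : exp (u - u ^ 2 / 2) ≤ 1 + u + u ^ 2 / 2 := by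
  have hq : 0 < 1 + u + u ^ 2 / 2 := by nlinarith [sq_nonneg (u + 1)]
  -- `(1 + u + u²/2) (1 - u + u²/2) = 1 + u⁴/4`
  have hinv : (1 + u + u ^ 2 / 2)⁻¹ ≤ 1 - u + u ^ 2 / 2 := by
    rw [inv_le_iff_one_le_mul₀' hq]
    nlinarith [sq_nonneg (u ^ 2)]
  calc exp (u - u ^ 2 / 2) ≤ exp (1 - (1 + u + u ^ 2 / 2)⁻¹) := exp_le_exp.2 (by linarith)
    _ ≤ exp (log (1 + u + u ^ 2 / 2)) := exp_le_exp.2 (one_sub_inv_le_log_of_pos hq)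
    _ = 1 + u + u ^ 2 / 2 := exp_log hq

lemma exp_sub_sq_half_le_exp_half (u : ℝ) : exp (u - u ^ 2 / 2) ≤ exp (1 / 2) :=
  exp_le_exp.2 (by nlinarith [sq_nonneg (u - 1)])

section OneStep

variable {Ω : Type*} {m m0 : MeasurableSpace Ω} {μ : Measure Ω} {Δ : Ω → ℝ}

lemma integrable_exp_mul_sub_sq_half [IsFiniteMeasure μ] (hΔ : AEStronglyMeasurable Δ μ)
    (t : ℝ) :
    Integrable (fun ω => exp (t * Δ ω - (t * Δ ω) ^ 2 / 2)) μ :=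
  .of_bound (by fun_prop) (exp (1 / 2)) <| ae_of_all _ fun ω => by
    rw [norm_of_nonneg (exp_pos _).le]
    exact exp_sub_sq_half_le_exp_half _

lemma condExp_exp_mul_sub_sq_half_le [IsFiniteMeasure μ] (hm : m ≤ m0) (hΔ : MemLp Δ 2 μ)
    (hΔ0 : μ[Δ | m] =ᵐ[μ] 0) (t : ℝ) :
    μ[fun ω => exp (t * Δ ω - (t * Δ ω) ^ 2 / 2) | m] ≤ᵐ[μ]
      fun ω => exp (t ^ 2 / 2 * μ[fun ω => Δ ω ^ 2 | m] ω) := by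
  have hΔint : Integrable Δ μ := hΔ.integrable one_le_two
  have hΔsq : Integrable (fun ω => Δ ω ^ 2) μ := hΔ.integrable_sq
  set g : Ω → ℝ := ((fun _ => 1) + t • Δ) + (t ^ 2 / 2) • fun ω => Δ ω ^ 2
  have hg : Integrable g μ :=
    ((integrable_const (1 : ℝ)).add (hΔint.smul t)).add (hΔsq.smul (t ^ 2 / 2))
  have hle_g : μ[fun ω => exp (t * Δ ω - (t * Δ ω) ^ 2 / 2) | m] ≤ᵐ[μ] μ[g | m] :=
    condExp_mono (integrable_exp_mul_sub_sq_half hΔ.1 t) hg <| ae_of_all _ fun ω => by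
      have := exp_sub_sq_half_le (t * Δ ω)
      simp only [g, Pi.add_apply, Pi.smul_apply, smul_eq_mul]
      linarith
  have hcond_g : μ[g | m] =ᵐ[μ] fun ω => 1 + t ^ 2 / 2 * μ[fun ω => Δ ω ^ 2 | m] ω := by
    filter_upwards [condExp_add ((integrable_const (1 : ℝ)).add (hΔint.smul t))
        (hΔsq.smul (t ^ 2 / 2)) m,
      condExp_add (integrable_const (1 : ℝ)) (hΔint.smul t) m, condExp_smul t Δ m,
      condExp_smul (t ^ 2 / 2) (fun ω => Δ ω ^ 2) m, hΔ0] with ω h₁ h₂ h₃ h₄ h₀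
    simp only [Pi.add_apply, Pi.smul_apply, smul_eq_mul, Pi.zero_apply] at h₁ h₂ h₃ h₄ h₀
    rw [h₁, h₂, h₃, h₄, h₀, condExp_const hm]
    ring
  filter_upwards [hle_g, hcond_g] with ω h₁ h₂
  linarith [add_one_le_exp (t ^ 2 / 2 * μ[fun ω => Δ ω ^ 2 | m] ω)]

lemma integrable_mul_exp_qv (hm : m ≤ m0) {Y : Ω → ℝ} (hY : Integrable Y μ)
    (hΔ : AEStronglyMeasurable Δ μ) (t : ℝ) :
    Integrable (fun ω => Y ω *
      exp (t * Δ ω - t ^ 2 / 2 * (Δ ω ^ 2 + μ[fun ω => Δ ω ^ 2 | m] ω))) μ := by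
  have hc : AEStronglyMeasurable (μ[fun ω => Δ ω ^ 2 | m]) μ :=
    (stronglyMeasurable_condExp.mono hm).aestronglyMeasurable
  refine hY.mul_bdd (c := exp (1 / 2)) (by fun_prop) ?_
  filter_upwards [condExp_nonneg (m := m) (ae_of_all μ fun ω => sq_nonneg (Δ ω))] with ω hc0
  rw [norm_of_nonneg (exp_pos _).le]
  refine (exp_le_exp.2 ?_).trans (exp_sub_sq_half_le_exp_half (t * Δ ω))
  nlinarith [mul_nonneg (sq_nonneg t) hc0]

lemma condExp_mul_exp_qv_le [IsFiniteMeasure μ] (hm : m ≤ m0) {Y : Ω → ℝ}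
    (hYm : StronglyMeasurable[m] Y) (hY0 : 0 ≤ Y) (hY : Integrable Y μ) (hΔ : MemLp Δ 2 μ)
    (hΔ0 : μ[Δ | m] =ᵐ[μ] 0) (t : ℝ) :
    μ[fun ω => Y ω *
      exp (t * Δ ω - t ^ 2 / 2 * (Δ ω ^ 2 + μ[fun ω => Δ ω ^ 2 | m] ω)) | m] ≤ᵐ[μ] Y := by
  set c := μ[fun ω => Δ ω ^ 2 | m]
  set A : Ω → ℝ := fun ω => Y ω * exp (-(t ^ 2 / 2 * c ω))
  set B : Ω → ℝ := fun ω => exp (t * Δ ω - (t * Δ ω) ^ 2 / 2)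
  have hsplit : (fun ω => Y ω * exp (t * Δ ω - t ^ 2 / 2 * (Δ ω ^ 2 + c ω))) = A * B := by
    funext ω
    simp only [A, B, Pi.mul_apply, mul_assoc, ← exp_add]
    ring_nf
  have hA : StronglyMeasurable[m] A :=
    hYm.mul (continuous_exp.comp_stronglyMeasurable (stronglyMeasurable_condExp.const_mul _).neg)
  have hAB : Integrable (A * B) μ := hsplit ▸ integrable_mul_exp_qv hm hY hΔ.1 t
  rw [hsplit]
  filter_upwards [condExp_mul_of_stronglyMeasurable_left hA hAB
      (integrable_exp_mul_sub_sq_half hΔ.1 t),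
    condExp_exp_mul_sub_sq_half_le hm hΔ hΔ0 t] with ω hpull hB
  have hA0 : 0 ≤ A ω := mul_nonneg (hY0 ω) (exp_pos _).le
  calc (μ[A * B | m]) ω = A ω * μ[B | m] ω := hpull
    _ ≤ A ω * exp (t ^ 2 / 2 * c ω) := mul_le_mul_of_nonneg_left hB hA0
    _ = Y ω := by simp only [A, mul_assoc, ← exp_add, neg_add_cancel, exp_zero, mul_one]

end OneStep

section Martingale

variable {Ω ι : Type*} [Preorder ι] {m0 : MeasurableSpace Ω} {μ : Measure Ω}
  {ℱ : Filtration ι m0} {f : ι → Ω → ℝ}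

lemma MeasureTheory.Martingale.condExp_sub_ae_eq_zero [IsFiniteMeasure μ]
    (hf : Martingale f ℱ μ) {i j : ι} (hij : i ≤ j) : μ[f j - f i | ℱ i] =ᵐ[μ] 0 := by
  filter_upwards [condExp_sub (hf.integrable j) (hf.integrable i) (ℱ i),
    hf.condExp_ae_eq hij] with ω h₁ h₂
  rw [h₁, Pi.sub_apply, h₂,
    condExp_of_stronglyMeasurable (ℱ.le i) (hf.stronglyAdapted i) (hf.integrable i),
    sub_self, Pi.zero_apply]

lemma MeasureTheory.Supermartingale.integral_le [SigmaFiniteFiltration μ ℱ]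
    (hf : Supermartingale f ℱ μ) {i j : ι} (hij : i ≤ j) : ∫ ω, f j ω ∂μ ≤ ∫ ω, f i ω ∂μ := by
  simpa only [setIntegral_univ] using hf.setIntegral_le hij MeasurableSet.univ

end Martingale

section ExpQuadVar

variable {Ω : Type*} {m0 : MeasurableSpace Ω} {μ : Measure Ω} {ℱ : Filtration ℕ m0}
  {M : ℕ → Ω → ℝ}

noncomputable def quadVar (M : ℕ → Ω → ℝ) (n : ℕ) (ω : Ω) : ℝ :=
  ∑ k ∈ Icc 1 n, (M k ω - M (k - 1) ω) ^ 2

noncomputable def predQuadVar (μ : Measure Ω) (ℱ : Filtration ℕ m0) (M : ℕ → Ω → ℝ) (n : ℕ)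
    (ω : Ω) : ℝ :=
  ∑ k ∈ Icc 1 n, (μ[fun ω' => (M k ω' - M (k - 1) ω') ^ 2 | ℱ (k - 1)]) ω

noncomputable def expQuadVar (μ : Measure Ω) (ℱ : Filtration ℕ m0) (M : ℕ → Ω → ℝ) (t : ℝ)
    (n : ℕ) (ω : Ω) : ℝ :=
  exp (t * M n ω - t ^ 2 / 2 * (quadVar M n ω + predQuadVar μ ℱ M n ω))

lemma quadVar_succ (n : ℕ) (ω : Ω) :
    quadVar M (n + 1) ω = quadVar M n ω + (M (n + 1) ω - M n ω) ^ 2 := by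
  rw [quadVar, quadVar, sum_Icc_succ_top (by omega), Nat.add_sub_cancel]

lemma predQuadVar_succ (n : ℕ) (ω : Ω) :
    predQuadVar μ ℱ M (n + 1) ω =
      predQuadVar μ ℱ M n ω + (μ[fun ω' => (M (n + 1) ω' - M n ω') ^ 2 | ℱ n]) ω := by
  rw [predQuadVar, predQuadVar, sum_Icc_succ_top (by omega), Nat.add_sub_cancel]

lemma expQuadVar_pos (t : ℝ) (n : ℕ) (ω : Ω) : 0 < expQuadVar μ ℱ M t n ω := exp_pos _

lemma expQuadVar_zero (hM0 : M 0 = 0) (t : ℝ) : expQuadVar μ ℱ M t 0 = 1 := by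
  funext ω
  simp [expQuadVar, quadVar, predQuadVar, hM0]

lemma expQuadVar_succ (t : ℝ) (n : ℕ) :
    expQuadVar μ ℱ M t (n + 1) = fun ω => expQuadVar μ ℱ M t n ω *
      exp (t * (M (n + 1) ω - M n ω) - t ^ 2 / 2 * ((M (n + 1) ω - M n ω) ^ 2 +
        (μ[fun ω' => (M (n + 1) ω' - M n ω') ^ 2 | ℱ n]) ω)) := by
  funext ω
  rw [expQuadVar, expQuadVar, ← exp_add, quadVar_succ, predQuadVar_succ]
  ring_nf

lemma stronglyAdapted_quadVar (hM : StronglyAdapted ℱ M) : StronglyAdapted ℱ (quadVar M) :=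
  fun n => Finset.stronglyMeasurable_fun_sum _ fun k hk =>
    (((hM k).mono (ℱ.mono (mem_Icc.1 hk).2)).sub
      ((hM (k - 1)).mono (ℱ.mono (by have := (mem_Icc.1 hk).2; omega)))).pow 2

lemma stronglyAdapted_predQuadVar : StronglyAdapted ℱ (predQuadVar μ ℱ M) :=
  fun n => Finset.stronglyMeasurable_fun_sum _ fun k hk =>
    stronglyMeasurable_condExp.mono (ℱ.mono (by have := (mem_Icc.1 hk).2; omega))

lemma stronglyAdapted_expQuadVar (hM : StronglyAdapted ℱ M) (t : ℝ) :
    StronglyAdapted ℱ (expQuadVar μ ℱ M t) := fun n =>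
  continuous_exp.comp_stronglyMeasurable <| (stronglyMeasurable_const.mul (hM n)).sub <|
    stronglyMeasurable_const.mul <|
      (stronglyAdapted_quadVar hM n).add (stronglyAdapted_predQuadVar n)

lemma integrable_expQuadVar [IsFiniteMeasure μ] (hM : StronglyAdapted ℱ M) (hM0 : M 0 = 0)
    (t : ℝ) (n : ℕ) : Integrable (expQuadVar μ ℱ M t n) μ := by
  induction n with
  | zero => exact expQuadVar_zero (μ := μ) (ℱ := ℱ) hM0 t ▸ integrable_const (1 : ℝ)
  | succ n ih =>
    rw [expQuadVar_succ]
    have hΔ : StronglyMeasurable (M (n + 1) - M n) :=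
      ((hM (n + 1)).mono (ℱ.le _)).sub ((hM n).mono (ℱ.le n))
    exact integrable_mul_exp_qv (ℱ.le n) ih hΔ.aestronglyMeasurable t

lemma supermartingale_expQuadVar [IsFiniteMeasure μ] (hM : Martingale M ℱ μ) (hM0 : M 0 = 0)
    (hMsq : ∀ n, MemLp (M n) 2 μ) (t : ℝ) : Supermartingale (expQuadVar μ ℱ M t) ℱ μ :=
  supermartingale_nat (stronglyAdapted_expQuadVar hM.stronglyAdapted t)
    (integrable_expQuadVar hM.stronglyAdapted hM0 t) fun n => by
      rw [expQuadVar_succ]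
      exact condExp_mul_exp_qv_le (ℱ.le n) (stronglyAdapted_expQuadVar hM.stronglyAdapted t n)
        (fun ω => (expQuadVar_pos t n ω).le) (integrable_expQuadVar hM.stronglyAdapted hM0 t n)
        ((hMsq (n + 1)).sub (hMsq n)) (hM.condExp_sub_ae_eq_zero n.le_succ) t

end ExpQuadVar

/-- Lemma B.1: for a locally square integrable real martingale `M` with `M 0 = 0` and
`V_n(t) = exp(t M_n − (t²/2)([M]_n + ⟨M⟩_n))`, for every real `t`, `(V_n(t))` is a positive
supermartingale with `E[V_n(t)] ≤ 1`. -/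
theorem exp_martingale_total_plus_predictable_qv_supermartingale
    {Ω : Type*} {m0 : MeasurableSpace Ω} {μ : Measure Ω} [IsProbabilityMeasure μ]
    {ℱ : Filtration ℕ m0} {M : ℕ → Ω → ℝ}
    (hM : Martingale M ℱ μ) (hM0 : M 0 = 0) (hMsq : ∀ n, MemLp (M n) 2 μ)
    (t : ℝ)
    (V : ℕ → Ω → ℝ)
    (hV : ∀ n ω, V n ω = Real.exp (t * M n ω - t ^ 2 / 2 *
      ((∑ k ∈ Finset.Icc 1 n, (M k ω - M (k - 1) ω) ^ 2) +
        ∑ k ∈ Finset.Icc 1 n,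
          (μ[fun ω' => (M k ω' - M (k - 1) ω') ^ 2 | ℱ (k - 1)]) ω))) :
    (∀ n ω, 0 < V n ω) ∧ Supermartingale V ℱ μ ∧ ∀ n, (∫ ω, V n ω ∂μ) ≤ 1 := by
  obtain rfl : V = expQuadVar μ ℱ M t := funext₂ hV
  have hsuper := supermartingale_expQuadVar hM hM0 hMsq t
  refine ⟨expQuadVar_pos t, hsuper, fun n => ?_⟩
  calc ∫ ω, expQuadVar μ ℱ M t n ω ∂μ ≤ ∫ ω, expQuadVar μ ℱ M t 0 ω ∂μ :=
        hsuper.integral_le n.zero_le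
    _ = 1 := by simp [expQuadVar_zero hM0]
end

section
/- Let (M_n) be a locally square integrable real martingale with M_0 = 0 that is heavy on left, and for real t and n ≥ 0 set W_n(t) = exp( t M_n − (t²/2)[M]_n ). Then for all t ≥ 0, (W_n(t))_{n≥0} is a positive supermartingale and E[W_n(t)] ≤ 1 for all n ≥ 0. -/
/-!
For `t ≥ 0` put `φ u = 1 - exp (-(t u + t² u² / 2))`. From `cosh y ≤ exp (y² / 2)` one gets
`exp (t x - t² x² / 2) ≤ 1 + sign x · φ |x|`, with equality for `x ≤ 0`. The function `φ` is
increasing and concave on `[0, ∞)` with `φ 0 = 0` and `φ' → 0`, so it is a mixture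
`φ u = ∫_{a > 0} min u a · w a da` with `w = -φ'' ≥ 0`; hence `sign x · φ |x| = ∫ T_a(x) w a da`.
By Fubini, heavy on left gives `E[sign ΔM_n · φ |ΔM_n| | F_{n-1}] ≤ 0`, so
`E[W_n / W_{n-1} | F_{n-1}] ≤ 1`, which is the supermartingale property, and `W_0 = 1`.
-/

open MeasureTheory ProbabilityTheory Real Finset

/-- The truncated version `T_a(x) = min(|x|, a) · sign(x)` of a real number. -/
noncomputable def truncAt (a : ℝ) (x : ℝ) : ℝ := min |x| a * Real.sign x

/-- A martingale `M` is heavy on left if all its increments are conditionally heavy on left: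
for all `n ≥ 1` and all `a > 0`, `E[T_a(ΔM_n) | ℱ_{n−1}] ≤ 0` almost surely. -/
def Martingale.IsHeavyOnLeft {Ω : Type*} {m0 : MeasurableSpace Ω} (μ : Measure Ω)
    (ℱ : Filtration ℕ m0) (M : ℕ → Ω → ℝ) : Prop :=
  ∀ n : ℕ, 1 ≤ n → ∀ a : ℝ, 0 < a →
    ∀ᵐ ω ∂μ, (μ[fun ω' => truncAt a (M n ω' - M (n - 1) ω') | ℱ (n - 1)]) ω ≤ 0

open Filter Topology

section MinRepresentation

variable {φ p w : ℝ → ℝ}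

theorem hasDerivAt_neg_of_hasDerivAt_neg (hp : ∀ a, HasDerivAt p (-w a) a) (a : ℝ) :
    HasDerivAt (fun a => -p a) (w a) a := by
  simpa only [neg_neg] using (hp a).fun_neg

theorem integrableOn_Ioi_of_hasDerivAt_neg (hp : ∀ a, HasDerivAt p (-w a) a)
    (hw : ∀ a ∈ Set.Ioi 0, 0 ≤ w a) (hp_lim : Tendsto p atTop (𝓝 0)) :
    IntegrableOn w (Set.Ioi 0) :=
  integrableOn_Ioi_deriv_of_nonneg' (g := fun a => -p a)
    (fun a _ => hasDerivAt_neg_of_hasDerivAt_neg hp a) hw (by simpa using hp_lim.neg)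

theorem integral_min_mul_eq (hφ : ∀ a, HasDerivAt φ (p a) a) (hφ0 : φ 0 = 0)
    (hp : ∀ a, HasDerivAt p (-w a) a) (hw : ∀ a ∈ Set.Ioi 0, 0 ≤ w a)
    (hp_lim : Tendsto p atTop (𝓝 0)) {u : ℝ} (hu : 0 ≤ u) :
    ∫ a in Set.Ioi 0, min u a * w a = φ u := by
  have hw_int := integrableOn_Ioi_of_hasDerivAt_neg hp hw hp_lim
  have hw_int_head : IntegrableOn (fun a => a * w a) (Set.Ioc 0 u) := by
    rw [← intervalIntegrable_iff_integrableOn_Ioc_of_le hu]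
    exact ((intervalIntegrable_iff_integrableOn_Ioc_of_le hu).2
      (hw_int.mono_set Set.Ioc_subset_Ioi_self)).continuousOn_mul continuousOn_id
  have hw_int_tail : IntegrableOn (fun a => u * w a) (Set.Ioi u) :=
    (hw_int.mono_set (Set.Ioi_subset_Ioi hu)).const_mul u
  have h_head : ∫ a in Set.Ioc 0 u, a * w a = φ u - u * p u := by
    rw [← intervalIntegral.integral_of_le hu,
      intervalIntegral.integral_eq_sub_of_hasDerivAt (f := fun a => φ a - a * p a)
        (fun a _ => ((hφ a).sub ((hasDerivAt_id a).mul (hp a))).congr_deriv (by simp))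
        ((intervalIntegrable_iff_integrableOn_Ioc_of_le hu).2 hw_int_head)]
    simp [hφ0]
  have h_tail : ∫ a in Set.Ioi u, w a = p u := by
    rw [integral_Ioi_of_hasDerivAt_of_nonneg' (g := fun a => -p a)
      (fun a _ => hasDerivAt_neg_of_hasDerivAt_neg hp a) (fun a ha => hw a (hu.trans_lt ha))
      (by simpa using hp_lim.neg), zero_sub, neg_neg]
  have h_eq_head : Set.EqOn (fun a => min u a * w a) (fun a => a * w a) (Set.Ioc 0 u) :=
    fun a ha => by simp only [min_eq_right ha.2]
  have h_eq_tail : Set.EqOn (fun a => min u a * w a) (fun a => u * w a) (Set.Ioi u) :=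
    fun a ha => by simp only [min_eq_left (le_of_lt (Set.mem_Ioi.1 ha))]
  rw [← Set.Ioc_union_Ioi_eq_Ioi hu,
    setIntegral_union (Set.Ioc_disjoint_Ioi le_rfl) measurableSet_Ioi
      (hw_int_head.congr_fun h_eq_head.symm measurableSet_Ioc)
      (hw_int_tail.congr_fun h_eq_tail.symm measurableSet_Ioi),
    setIntegral_congr_fun measurableSet_Ioc h_eq_head,
    setIntegral_congr_fun measurableSet_Ioi h_eq_tail, integral_const_mul, h_head, h_tail]
  ring

theorem integral_truncAt_mul_eq (hφ : ∀ a, HasDerivAt φ (p a) a) (hφ0 : φ 0 = 0)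
    (hp : ∀ a, HasDerivAt p (-w a) a) (hw : ∀ a ∈ Set.Ioi 0, 0 ≤ w a)
    (hp_lim : Tendsto p atTop (𝓝 0)) (x : ℝ) :
    ∫ a in Set.Ioi 0, truncAt a x * w a = Real.sign x * φ |x| := by
  have h_factor : ∀ a, truncAt a x * w a = Real.sign x * (min |x| a * w a) := fun a => by
    rw [truncAt]; ring
  simp_rw [h_factor]
  rw [integral_const_mul, integral_min_mul_eq hφ hφ0 hp hw hp_lim (abs_nonneg x)]

end MinRepresentation

theorem Real.monotone_sign : Monotone Real.sign := by
  intro x y hxy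
  rcases lt_trichotomy x 0 with hx | rfl | hx
  · rw [Real.sign_of_neg hx]
    rcases Real.sign_apply_eq y with h | h | h <;> rw [h] <;> norm_num
  · rcases lt_trichotomy y 0 with hy | rfl | hy
    · exact absurd hxy (not_le.2 hy)
    · rfl
    · simp [Real.sign_of_pos hy]
  · rw [Real.sign_of_pos hx, Real.sign_of_pos (hx.trans_le hxy)]

theorem measurable_truncAt : Measurable (Function.uncurry truncAt) :=
  (measurable_snd.abs.min measurable_fst).mul (Real.monotone_sign.measurable.comp measurable_snd)

theorem abs_truncAt_le_abs {a : ℝ} (ha : 0 ≤ a) (x : ℝ) : |truncAt a x| ≤ |x| := by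
  have h_sign : |Real.sign x| ≤ 1 := by
    rcases Real.sign_apply_eq x with h | h | h <;> rw [h] <;> norm_num
  rw [truncAt, abs_mul, abs_of_nonneg (le_min (abs_nonneg x) ha)]
  calc min |x| a * |Real.sign x| ≤ min |x| a * 1 := by gcongr
    _ ≤ |x| := by rw [mul_one]; exact min_le_left _ _

theorem norm_exp_mul_sub_sq_le (t x : ℝ) : ‖exp (t * x - t ^ 2 / 2 * x ^ 2)‖ ≤ exp (1 / 2) := by
  rw [Real.norm_eq_abs, abs_of_pos (exp_pos _), exp_le_exp]
  nlinarith [sq_nonneg (t * x - 1)]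

section Conditional

variable {Ω : Type*} {m m0 : MeasurableSpace Ω} {μ : Measure Ω}

theorem condExp_nonpos_of_forall_setIntegral_nonpos (hm : m ≤ m0) [SigmaFinite (μ.trim hm)]
    {f : Ω → ℝ} (hf : Integrable f μ) (hf_le : ∀ s, MeasurableSet[m] s → ∫ ω in s, f ω ∂μ ≤ 0) :
    μ[f | m] ≤ᵐ[μ] 0 := by
  refine ae_le_of_ae_le_trim (hm := hm) <| ae_le_of_forall_setIntegral_le
    (integrable_condExp.trim hm stronglyMeasurable_condExp) (integrable_zero _ _ _)
    fun s hs _ => ?_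
  rw [← setIntegral_trim hm stronglyMeasurable_condExp hs, setIntegral_condExp hm hf hs]
  simpa using hf_le s hs

theorem integrable_truncAt_mul_prod [SFinite μ] {X : Ω → ℝ} (hX : Integrable X μ) {w : ℝ → ℝ}
    (hw : IntegrableOn w (Set.Ioi 0)) :
    Integrable (Function.uncurry fun ω a => truncAt a (X ω) * w a)
      (μ.prod (volume.restrict (Set.Ioi 0))) := by
  refine (hX.norm.mul_prod hw.norm).mono' ?_ ?_
  · exact (measurable_truncAt.comp_aemeasurable
      (measurable_snd.aemeasurable.prodMk hX.aemeasurable.comp_fst)).aestronglyMeasurable.mul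
      hw.aestronglyMeasurable.comp_snd
  · filter_upwards [Measure.quasiMeasurePreserving_snd.ae (ae_restrict_mem measurableSet_Ioi)]
      with z hz
    rw [Function.uncurry_apply_pair, norm_mul]
    exact mul_le_mul_of_nonneg_right (abs_truncAt_le_abs (le_of_lt hz) _) (norm_nonneg _)

theorem integrable_truncAt {X : Ω → ℝ} (hX : Integrable X μ) {a : ℝ} (ha : 0 ≤ a) :
    Integrable (fun ω => truncAt a (X ω)) μ :=
  hX.norm.mono' (measurable_truncAt.comp_aemeasurable
    (aemeasurable_const.prodMk hX.aemeasurable)).aestronglyMeasurable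
    (ae_of_all _ fun ω => abs_truncAt_le_abs ha (X ω))

theorem condExp_integral_truncAt_mul_nonpos (hm : m ≤ m0) [IsFiniteMeasure μ] {X : Ω → ℝ}
    (hX : Integrable X μ) (hheavy : ∀ a, 0 < a → μ[fun ω => truncAt a (X ω) | m] ≤ᵐ[μ] 0)
    {w : ℝ → ℝ} (hw : IntegrableOn w (Set.Ioi 0)) (hw_nonneg : ∀ a ∈ Set.Ioi 0, 0 ≤ w a) :
    μ[fun ω => ∫ a in Set.Ioi 0, truncAt a (X ω) * w a | m] ≤ᵐ[μ] 0 := by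
  refine condExp_nonpos_of_forall_setIntegral_nonpos hm
    (integrable_truncAt_mul_prod hX hw).integral_prod_left fun s hs => ?_
  rw [integral_integral_swap (integrable_truncAt_mul_prod hX.restrict hw)]
  refine setIntegral_nonpos measurableSet_Ioi fun a (ha : 0 < a) => ?_
  have h_trunc : ∫ ω in s, truncAt a (X ω) ∂μ ≤ 0 := by
    rw [← setIntegral_condExp hm (integrable_truncAt hX ha.le) hs]
    exact integral_nonpos_of_ae (ae_restrict_of_ae (hheavy a ha))
  rw [integral_mul_const]
  exact mul_nonpos_of_nonpos_of_nonneg h_trunc (hw_nonneg a ha)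

end Conditional

namespace HeavyOnLeft

noncomputable def profile (t u : ℝ) : ℝ := 1 - exp (-(t * u + t ^ 2 / 2 * u ^ 2))

noncomputable def profileDeriv (t u : ℝ) : ℝ := (t + t ^ 2 * u) * exp (-(t * u + t ^ 2 / 2 * u ^ 2))

noncomputable def profileWeight (t u : ℝ) : ℝ :=
  t ^ 3 * u * (2 + t * u) * exp (-(t * u + t ^ 2 / 2 * u ^ 2))

theorem hasDerivAt_exp_neg_quadratic (t u : ℝ) :
    HasDerivAt (fun u => exp (-(t * u + t ^ 2 / 2 * u ^ 2)))
      (-(t + t ^ 2 * u) * exp (-(t * u + t ^ 2 / 2 * u ^ 2))) u := by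
  have h : HasDerivAt (fun u => -(t * u + t ^ 2 / 2 * u ^ 2)) (-(t + t ^ 2 * u)) u :=
    (((hasDerivAt_id' u).const_mul t).add ((hasDerivAt_pow 2 u).const_mul (t ^ 2 / 2))).fun_neg
      |>.congr_deriv (by ring)
  exact h.exp.congr_deriv (by ring)

theorem hasDerivAt_profile (t u : ℝ) : HasDerivAt (profile t) (profileDeriv t u) u :=
  ((hasDerivAt_exp_neg_quadratic t u).const_sub 1).congr_deriv (by rw [profileDeriv]; ring)

theorem hasDerivAt_profileDeriv (t u : ℝ) :
    HasDerivAt (profileDeriv t) (-profileWeight t u) u :=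
  (((hasDerivAt_id' u).const_mul (t ^ 2)).const_add t |>.mul
    (hasDerivAt_exp_neg_quadratic t u)).congr_deriv (by rw [profileWeight]; ring)

theorem profile_zero (t : ℝ) : profile t 0 = 0 := by simp [profile]

theorem profileWeight_nonneg {t u : ℝ} (ht : 0 ≤ t) (hu : 0 ≤ u) : 0 ≤ profileWeight t u := by
  unfold profileWeight; positivity

theorem profileDeriv_le {t : ℝ} (ht : 0 ≤ t) (u : ℝ) :
    profileDeriv t u ≤ t * exp (-(t ^ 2 / 2 * u ^ 2)) := by
  have h_lin : (1 + t * u) * exp (-(t * u)) ≤ 1 := by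
    rw [exp_neg, ← div_eq_mul_inv, div_le_one (exp_pos _)]
    linarith [add_one_le_exp (t * u)]
  calc profileDeriv t u = t * ((1 + t * u) * exp (-(t * u))) * exp (-(t ^ 2 / 2 * u ^ 2)) := by
        rw [profileDeriv, neg_add, exp_add]; ring
    _ ≤ t * 1 * exp (-(t ^ 2 / 2 * u ^ 2)) := by gcongr
    _ = t * exp (-(t ^ 2 / 2 * u ^ 2)) := by rw [mul_one]

theorem tendsto_profileDeriv_atTop {t : ℝ} (ht : 0 ≤ t) :
    Tendsto (profileDeriv t) atTop (𝓝 0) := by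
  have h_bound : Tendsto (fun u => t * exp (-(t ^ 2 / 2 * u ^ 2))) atTop (𝓝 0) := by
    rcases ht.eq_or_lt with rfl | ht
    · simp
    · simpa using (tendsto_exp_neg_atTop_nhds_zero.comp
        ((tendsto_pow_atTop two_ne_zero).const_mul_atTop (by positivity))).const_mul t
  refine squeeze_zero' ?_ ?_ h_bound
  · filter_upwards [eventually_ge_atTop 0] with u hu
    unfold profileDeriv; positivity
  · exact Eventually.of_forall (profileDeriv_le ht)

theorem integrableOn_profileWeight {t : ℝ} (ht : 0 ≤ t) :
    IntegrableOn (profileWeight t) (Set.Ioi 0) :=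
  integrableOn_Ioi_of_hasDerivAt_neg (hasDerivAt_profileDeriv t)
    (fun _ hu => profileWeight_nonneg ht (le_of_lt hu)) (tendsto_profileDeriv_atTop ht)

theorem integral_truncAt_mul_profileWeight {t : ℝ} (ht : 0 ≤ t) (x : ℝ) :
    ∫ a in Set.Ioi 0, truncAt a x * profileWeight t a = Real.sign x * profile t |x| :=
  integral_truncAt_mul_eq (hasDerivAt_profile t) (profile_zero t) (hasDerivAt_profileDeriv t)
    (fun _ hu => profileWeight_nonneg ht (le_of_lt hu)) (tendsto_profileDeriv_atTop ht) x

theorem exp_mul_sub_sq_le (t x : ℝ) :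
    exp (t * x - t ^ 2 / 2 * x ^ 2) ≤ 1 + Real.sign x * profile t |x| := by
  rcases lt_trichotomy x 0 with hx | rfl | hx
  · rw [Real.sign_of_neg hx, abs_of_neg hx, profile]
    exact le_of_eq (by ring_nf)
  · simp
  · rw [Real.sign_of_pos hx, abs_of_pos hx, profile]
    set c := t ^ 2 / 2 * x ^ 2
    have h := cosh_le_exp_half_sq (t * x)
    rw [cosh_eq, show (t * x) ^ 2 / 2 = c by ring] at h
    have h_cancel : exp c * exp (-c) = 1 := by rw [← exp_add, add_neg_cancel, exp_zero]
    rw [sub_eq_add_neg, exp_add, neg_add, exp_add]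
    nlinarith [exp_pos (-c)]

theorem condExp_exp_mul_sub_sq_le_one {Ω : Type*} {m m0 : MeasurableSpace Ω} {μ : Measure Ω}
    (hm : m ≤ m0) [IsFiniteMeasure μ] {X : Ω → ℝ}
    (hX : Integrable X μ) (hheavy : ∀ a, 0 < a → μ[fun ω => truncAt a (X ω) | m] ≤ᵐ[μ] 0)
    {t : ℝ} (ht : 0 ≤ t) :
    μ[fun ω => exp (t * X ω - t ^ 2 / 2 * X ω ^ 2) | m] ≤ᵐ[μ] 1 := by
  set G := fun ω => ∫ a in Set.Ioi 0, truncAt a (X ω) * profileWeight t a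
  have hG_int : Integrable G μ :=
    (integrable_truncAt_mul_prod hX (integrableOn_profileWeight ht)).integral_prod_left
  have h_int : Integrable (fun ω => exp (t * X ω - t ^ 2 / 2 * X ω ^ 2)) μ := by
    exact .of_bound (by fun_prop) _ (ae_of_all _ fun ω => norm_exp_mul_sub_sq_le t (X ω))
  have h_le : (fun ω => exp (t * X ω - t ^ 2 / 2 * X ω ^ 2)) ≤ᵐ[μ] (fun _ => 1) + G :=
    ae_of_all _ fun ω => by
      simp only [Pi.add_apply, G, integral_truncAt_mul_profileWeight ht]
      exact exp_mul_sub_sq_le t (X ω)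
  filter_upwards [condExp_mono h_int ((integrable_const 1).add hG_int) h_le,
    condExp_add (integrable_const 1) hG_int m,
    condExp_integral_truncAt_mul_nonpos hm hX hheavy (integrableOn_profileWeight ht)
      (fun _ ha => profileWeight_nonneg ht (le_of_lt ha))] with ω h_mono h_add h_G
  rw [h_add, Pi.add_apply, condExp_const hm] at h_mono
  simpa using h_mono.trans (add_le_of_nonpos_right h_G)

end HeavyOnLeft

theorem supermartingale_of_mul_condExp_le_one {Ω : Type*} {m0 : MeasurableSpace Ω}
    {μ : Measure Ω} [IsFiniteMeasure μ] {ℱ : Filtration ℕ m0} {W ρ : ℕ → Ω → ℝ} {C : ℝ}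
    (hW0 : StronglyMeasurable[ℱ 0] (W 0)) (hW0_int : Integrable (W 0) μ)
    (hW_nonneg : ∀ n ω, 0 ≤ W n ω) (hρ : ∀ n, StronglyMeasurable[ℱ (n + 1)] (ρ n))
    (hρ_bdd : ∀ n ω, ‖ρ n ω‖ ≤ C) (hρ_condExp : ∀ n, μ[ρ n | ℱ n] ≤ᵐ[μ] 1)
    (hW_succ : ∀ n, W (n + 1) = W n * ρ n) :
    Supermartingale W ℱ μ := by
  have hρ_int (n : ℕ) : Integrable (ρ n) μ :=
    .of_bound ((hρ n).mono (ℱ.le _)).aestronglyMeasurable C (ae_of_all _ (hρ_bdd n))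
  have hW_adapted : StronglyAdapted ℱ W := by
    intro n
    induction n with
    | zero => exact hW0
    | succ n ih => rw [hW_succ]; exact (ih.mono (ℱ.mono n.le_succ)).mul (hρ n)
  have hW_int (n : ℕ) : Integrable (W n) μ := by
    induction n with
    | zero => exact hW0_int
    | succ n ih =>
      rw [hW_succ]
      exact ih.mul_bdd (hρ_int n).aestronglyMeasurable (ae_of_all _ (hρ_bdd n))
  refine supermartingale_nat hW_adapted hW_int fun n => ?_
  rw [hW_succ]
  filter_upwards [condExp_mul_of_stronglyMeasurable_left (hW_adapted n)
    (hW_succ n ▸ hW_int (n + 1)) (hρ_int n), hρ_condExp n] with ω h_pull h_le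
  rw [h_pull, Pi.mul_apply]
  exact mul_le_of_le_one_right (hW_nonneg n ω) h_le

theorem heavyOnLeft_exp_martingale_supermartingale_general
    {Ω : Type*} {m0 : MeasurableSpace Ω} {μ : Measure Ω} [IsProbabilityMeasure μ]
    {ℱ : Filtration ℕ m0} {M : ℕ → Ω → ℝ}
    (hM : Martingale M ℱ μ) (hM0 : M 0 = 0)
    (hheavy : Martingale.IsHeavyOnLeft μ ℱ M)
    {t : ℝ} (ht : 0 ≤ t)
    (W : ℕ → Ω → ℝ)
    (hW : ∀ n ω, W n ω = Real.exp (t * M n ω - t ^ 2 / 2 *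
      ∑ k ∈ Finset.Icc 1 n, (M k ω - M (k - 1) ω) ^ 2)) :
    (∀ n ω, 0 < W n ω) ∧ Supermartingale W ℱ μ ∧ ∀ n, (∫ ω, W n ω ∂μ) ≤ 1 := by
  set ρ : ℕ → Ω → ℝ := fun n ω =>
    exp (t * (M (n + 1) ω - M n ω) - t ^ 2 / 2 * (M (n + 1) ω - M n ω) ^ 2)
  have hW_pos (n : ℕ) (ω : Ω) : 0 < W n ω := hW n ω ▸ exp_pos _
  have hW0 : W 0 = 1 := funext fun ω => by simp [hW, hM0]
  have hW_succ (n : ℕ) : W (n + 1) = W n * ρ n := funext fun ω => by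
    rw [Pi.mul_apply, hW, hW, ← exp_add, Finset.sum_Icc_succ_top (by omega), Nat.add_sub_cancel]
    ring_nf
  have hρ (n : ℕ) : StronglyMeasurable[ℱ (n + 1)] (ρ n) := by
    have h₁ := (hM.stronglyAdapted (n + 1)).measurable
    have h₀ := ((hM.stronglyAdapted n).mono (ℱ.mono n.le_succ)).measurable
    exact Measurable.stronglyMeasurable (by fun_prop)
  have hρ_condExp (n : ℕ) : μ[ρ n | ℱ n] ≤ᵐ[μ] 1 :=
    HeavyOnLeft.condExp_exp_mul_sub_sq_le_one (ℱ.le n)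
      ((hM.integrable (n + 1)).sub (hM.integrable n))
      (fun a ha => hheavy (n + 1) (by omega) a ha) ht
  have hW_super : Supermartingale W ℱ μ :=
    supermartingale_of_mul_condExp_le_one (hW0 ▸ stronglyMeasurable_const)
      (hW0 ▸ integrable_const 1) (fun n ω => (hW_pos n ω).le) hρ
      (fun n ω => norm_exp_mul_sub_sq_le t _) hρ_condExp hW_succ
  refine ⟨hW_pos, hW_super, fun n => ?_⟩
  calc ∫ ω, W n ω ∂μ ≤ ∫ ω, W 0 ω ∂μ := by
        simpa using hW_super.setIntegral_le (Nat.zero_le n) MeasurableSet.univ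
    _ = 1 := by simp [hW0]

/-- Lemma C.1 (1): for a locally square integrable real martingale `M` with `M 0 = 0` which is
heavy on left, and `W_n(t) = exp(t M_n − (t²/2)[M]_n)`, for every `t ≥ 0`, `(W_n(t))` is a
positive supermartingale with `E[W_n(t)] ≤ 1`. -/
theorem heavyOnLeft_exp_martingale_supermartingale
    {Ω : Type*} {m0 : MeasurableSpace Ω} {μ : Measure Ω} [IsProbabilityMeasure μ]
    {ℱ : Filtration ℕ m0} {M : ℕ → Ω → ℝ}
    (hM : Martingale M ℱ μ) (hM0 : M 0 = 0) (hMsq : ∀ n, MemLp (M n) 2 μ)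
    (hheavy : Martingale.IsHeavyOnLeft μ ℱ M)
    {t : ℝ} (ht : 0 ≤ t)
    (W : ℕ → Ω → ℝ)
    (hW : ∀ n ω, W n ω = Real.exp (t * M n ω - t ^ 2 / 2 *
      ∑ k ∈ Finset.Icc 1 n, (M k ω - M (k - 1) ω) ^ 2)) :
    (∀ n ω, 0 < W n ω) ∧ Supermartingale W ℱ μ ∧ ∀ n, (∫ ω, W n ω ∂μ) ≤ 1 :=
  heavyOnLeft_exp_martingale_supermartingale_general hM hM0 hheavy ht W hW
end
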